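/- Let f : ℝ → ℝ be twice continuously differentiable and satisfy f(u)(1 + f′(u)²) = f″(u)(1 + f(u)²) for all u. Define f¹(u, v) = f(u)cos v and f²(u, v) = f(u)sin v. Then the graph (u, v, f¹(u, v), f²(u, v)) in ℝ⁴ satisfies the minimal surface equations: g₂₂ ∂²f^k/∂u² + g₁₁ ∂²f^k/∂v² − 2 g₁₂ ∂²f^k/∂u∂v = 0 for k = 1, 2, where g₁₁ = 1 + (∂f¹/∂u)² + (∂f²/∂u)², g₂₂ = 1 + (∂f¹/∂v)² + (∂f²/∂v)², g₁₂ = (∂f¹/∂u)(∂f¹/∂v) + (∂f²/∂u)(∂f²/∂v). -/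

import Mathlib

/-! On the surface `(u, v, f(u) cos v, f(u) sin v)` the coordinate directions are orthogonal,
`g₁₂ = 0`, with `g₁₁ = 1 + f′²` and `g₂₂ = 1 + f²`; the two minimal surface equations are then
`cos v` and `sin v` times `f″(1 + f²) − f(1 + f′²)`. -/

noncomputable section

/-- Partial derivative in the first variable. -/
def pd1 (F : ℝ → ℝ → ℝ) (u v : ℝ) : ℝ := deriv (fun x => F x v) u

/-- Partial derivative in the second variable. -/
def pd2 (F : ℝ → ℝ → ℝ) (u v : ℝ) : ℝ := deriv (fun y => F u y) v

/-- The minimal surface equations for the graph `(u, v, F1(u,v), F2(u,v)) ⊂ ℝ⁴`: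
`g₂₂ ∂²F_k/∂u² + g₁₁ ∂²F_k/∂v² − 2 g₁₂ ∂²F_k/∂u∂v = 0` for `k = 1, 2`, where
`g₁₁ = 1 + (∂F1/∂u)² + (∂F2/∂u)²`, `g₂₂ = 1 + (∂F1/∂v)² + (∂F2/∂v)²`,
`g₁₂ = (∂F1/∂u)(∂F1/∂v) + (∂F2/∂u)(∂F2/∂v)`. -/
def MinimalGraphEq (F1 F2 : ℝ → ℝ → ℝ) (u v : ℝ) : Prop :=
  ((1 + (pd2 F1 u v) ^ 2 + (pd2 F2 u v) ^ 2) * pd1 (pd1 F1) u v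
    + (1 + (pd1 F1 u v) ^ 2 + (pd1 F2 u v) ^ 2) * pd2 (pd2 F1) u v
    - 2 * (pd1 F1 u v * pd2 F1 u v + pd1 F2 u v * pd2 F2 u v) * pd1 (pd2 F1) u v = 0) ∧
  ((1 + (pd2 F1 u v) ^ 2 + (pd2 F2 u v) ^ 2) * pd1 (pd1 F2) u v
    + (1 + (pd1 F1 u v) ^ 2 + (pd1 F2 u v) ^ 2) * pd2 (pd2 F2) u v
    - 2 * (pd1 F1 u v * pd2 F1 u v + pd1 F2 u v * pd2 F2 u v) * pd1 (pd2 F2) u v = 0)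

-- No differentiability is needed: where `g` or `h` is not differentiable both sides are `0`.
theorem pd1_mul (g h : ℝ → ℝ) :
    pd1 (fun a b => g a * h b) = fun x y => deriv g x * h y := by
  ext x y
  exact deriv_mul_const_field (h y)

theorem pd2_mul (g h : ℝ → ℝ) :
    pd2 (fun a b => g a * h b) = fun x y => g x * deriv h y := by
  ext x y
  exact deriv_const_mul_field (g x)

theorem stmt14_general (f : ℝ → ℝ)
    (hode : ∀ u : ℝ, f u * (1 + (deriv f u) ^ 2) = deriv (deriv f) u * (1 + (f u) ^ 2))
    (u v : ℝ) :
    MinimalGraphEq (fun u v => f u * Real.cos v) (fun u v => f u * Real.sin v) u v := by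
  simp only [MinimalGraphEq, pd1_mul, pd2_mul, Real.deriv_cos', Real.deriv_sin, deriv.fun_neg]
  have hsc := Real.sin_sq_add_cos_sq v
  constructor
  · linear_combination (-Real.cos v) * hode u
      + (f u ^ 2 * deriv (deriv f) u - deriv f u ^ 2 * f u) * Real.cos v * hsc
  · linear_combination (-Real.sin v) * hode u
      + (f u ^ 2 * deriv (deriv f) u - deriv f u ^ 2 * f u) * Real.sin v * hsc

/-- if `f` is C² and solves `f(1 + (f′)²) = f″(1 + f²)`, then the
graph `(u, v, f(u)cos v, f(u)sin v)` satisfies the minimal surface equations. -/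
theorem stmt14 (f : ℝ → ℝ) (hf : ContDiff ℝ 2 f)
    (hode : ∀ u : ℝ, f u * (1 + (deriv f u) ^ 2) = deriv (deriv f) u * (1 + (f u) ^ 2))
    (u v : ℝ) :
    MinimalGraphEq (fun u v => f u * Real.cos v) (fun u v => f u * Real.sin v) u v :=
  stmt14_general f hode u v
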